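/- Let φ be a Finsler norm on ℝ^d, ζ > 0, φ_ζ the Minkowski gauge of E_ζ = {φ≤1} + B̄_ζ(0), and 𝒬_ζ : ∂E_ζ → {φ = 1} the nearest-point map. Then for every q̄ ∈ {φ = 1}, the preimage {q ∈ ∂E_ζ : 𝒬_ζ(q) = q̄} equals q̄ + {ζp/‖p‖ : p ∈ ∂φ(q̄)}. -/

import Mathlib

open scoped InnerProductSpace RealInnerProductSpace Pointwise

open Metric Filter Topology

/-!
The set `K = {φ ≤ 1}` is closed, convex and a neighbourhood of `0`, and `E_ζ` is its closed
`ζ`-thickening. For a convex set, `qb` is a nearest point of `K` to `q` exactly when `q - qb`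
lies in the normal cone of `K` at `qb`; along such a normal ray the distance to `K` grows
linearly, so `qb + v` lies on `∂E_ζ` as soon as `‖v‖ = ζ`. Finally, since `φ` is the gauge of
`K`, its subgradients at `qb` are the normals `p` to `K` at `qb` normalised by `⟪p, qb⟫ = 1`,
and a nonzero normal has `⟪v, qb⟫ > 0` because `0` is an interior point of `K`.
-/

theorem IsClosed.add_closedBall_zero {E : Type*} [NormedAddCommGroup E] [ProperSpace E]
    {s : Set E} (hs : IsClosed s) {δ : ℝ} (hδ : 0 ≤ δ) :
    s + closedBall (0 : E) δ = cthickening δ s := by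
  rw [hs.cthickening_eq_biUnion_closedBall hδ]
  ext x
  simp only [Set.mem_add, dist_eq_norm_sub, exists_prop, Set.mem_iUnion, mem_closedBall,
    ← eq_sub_iff_add_eq', sub_zero, exists_eq_right]

section Thickening

variable {α : Type*} [PseudoMetricSpace α] {s : Set α} {δ : ℝ} {y : α}

theorem infDist_le_of_mem_cthickening (hδ : 0 ≤ δ) (hy : y ∈ cthickening δ s) :
    infDist y s ≤ δ := by
  rw [infDist, ← ENNReal.toReal_ofReal hδ]
  exact ENNReal.toReal_mono ENNReal.ofReal_ne_top hy

theorem infDist_eq_of_mem_frontier_cthickening (hδ : 0 ≤ δ)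
    (hy : y ∈ frontier (cthickening δ s)) : infDist y s = δ := by
  rw [infDist, (frontier_cthickening_subset s hy : infEDist y s = _), ENNReal.toReal_ofReal hδ]

end Thickening

section NormalCone

variable {F : Type*} [NormedAddCommGroup F] [InnerProductSpace ℝ F] {K : Set F} {x v : F}

def normalCone (K : Set F) (x : F) : Set F :=
  {v | ∀ y ∈ K, ⟪v, y - x⟫_ℝ ≤ 0}

theorem smul_mem_normalCone (hv : v ∈ normalCone K x) {c : ℝ} (hc : 0 ≤ c) :
    c • v ∈ normalCone K x := fun y hy => by
  rw [real_inner_smul_left]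
  exact mul_nonpos_of_nonneg_of_nonpos hc (hv y hy)

theorem norm_sub_eq_infDist_iff_mem_normalCone (hK : Convex ℝ K) (hx : x ∈ K) {q : F} :
    ‖q - x‖ = infDist q K ↔ q - x ∈ normalCone K x := by
  simp_rw [infDist_eq_iInf, dist_eq_norm]
  exact norm_eq_iInf_iff_real_inner_le_zero hK hx

theorem infDist_add_eq_norm_of_mem_normalCone (hK : Convex ℝ K) (hx : x ∈ K)
    (hv : v ∈ normalCone K x) : infDist (x + v) K = ‖v‖ := by
  rw [← add_sub_cancel_left x v, (norm_sub_eq_infDist_iff_mem_normalCone hK hx).2] <;>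
    simp [hv]

theorem add_mem_frontier_cthickening (hK : Convex ℝ K) (hx : x ∈ K)
    (hv : v ∈ normalCone K x) (hv0 : v ≠ 0) : x + v ∈ frontier (cthickening ‖v‖ K) := by
  refine ⟨subset_closure (mem_cthickening_of_dist_le _ x _ _ hx (by simp [dist_eq_norm])),
    fun hint => ?_⟩
  -- pushing `x + v` further out along the normal ray leaves the thickening
  have hray : Tendsto (fun t : ℝ => x + (1 + t) • v) (𝓝[>] 0) (𝓝 (x + v)) := by
    have hcont : Continuous fun t : ℝ => x + (1 + t) • v := by fun_prop
    simpa using (hcont.tendsto 0).mono_left nhdsWithin_le_nhds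
  obtain ⟨t, hmem, ht : 0 < t⟩ :=
    ((hray.eventually_mem (isOpen_interior.mem_nhds hint)).and self_mem_nhdsWithin).exists
  have hle := infDist_le_of_mem_cthickening (norm_nonneg v) (interior_subset hmem)
  rw [infDist_add_eq_norm_of_mem_normalCone hK hx (smul_mem_normalCone hv (by linarith)),
    norm_smul, Real.norm_of_nonneg (by linarith)] at hle
  nlinarith [norm_pos_iff.2 hv0]

theorem inner_pos_of_mem_normalCone (hK : K ∈ 𝓝 0) (hv : v ∈ normalCone K x) (hv0 : v ≠ 0) :
    0 < ⟪v, x⟫_ℝ := by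
  obtain ⟨r, hr, hball⟩ := Metric.mem_nhds_iff.1 hK
  have hnv : 0 < ‖v‖ := norm_pos_iff.2 hv0
  have hy : (r / 2 / ‖v‖) • v ∈ K := hball <| by
    rw [mem_ball_zero_iff, norm_smul, Real.norm_of_nonneg (by positivity), div_mul_cancel₀ _ hnv.ne']
    linarith
  have hin := hv _ hy
  rw [inner_sub_right, real_inner_smul_right, real_inner_self_eq_norm_sq] at hin
  have : 0 < r / 2 / ‖v‖ * ‖v‖ ^ 2 := by positivity
  linarith

end NormalCone

section Gauge

variable {F : Type*} [NormedAddCommGroup F] [InnerProductSpace ℝ F] {φ : F → ℝ}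

theorem map_zero_of_pos_homogeneous (hhom : ∀ c : ℝ, 0 < c → ∀ x, φ (c • x) = c * φ x) :
    φ 0 = 0 := by
  have h := hhom 2 two_pos 0
  rw [smul_zero] at h
  linarith

theorem hasSubgradient_iff_mem_normalCone (hnonneg : ∀ x, 0 ≤ φ x)
    (hhom : ∀ c : ℝ, 0 < c → ∀ x, φ (c • x) = c * φ x) {qb p : F} (hqb : φ qb = 1) :
    (∀ y, φ qb + ⟪p, y - qb⟫_ℝ ≤ φ y) ↔ ⟪p, qb⟫_ℝ = 1 ∧ p ∈ normalCone {x | φ x ≤ 1} qb := by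
  rw [hqb]
  constructor
  · intro h
    have h0 := h 0
    have h2 := h ((2 : ℝ) • qb)
    rw [map_zero_of_pos_homogeneous hhom, zero_sub, inner_neg_right] at h0
    rw [hhom 2 two_pos, hqb, two_smul, add_sub_cancel_right] at h2
    exact ⟨by linarith, fun y hy => by linarith [h y, hy.out]⟩
  · rintro ⟨hpqb, hp⟩ y
    -- `φ` is the gauge of `{φ ≤ 1}`: `y / s` lies in it for every `s > φ y`
    have hle : ⟪p, y⟫_ℝ ≤ φ y := le_of_forall_gt_imp_ge_of_dense fun s hs => by
      have hs0 : 0 < s := (hnonneg y).trans_lt hs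
      have hmem : s⁻¹ • y ∈ {x | φ x ≤ 1} := by
        show φ (s⁻¹ • y) ≤ 1
        rw [hhom _ (inv_pos.2 hs0), inv_mul_le_one₀ hs0]
        exact hs.le
      have hin := hp _ hmem
      rw [inner_sub_right, real_inner_smul_right, hpqb, sub_nonpos, inv_mul_le_one₀ hs0] at hin
      exact hin
    rw [inner_sub_right, hpqb]
    linarith

end Gauge

theorem finsler_nearest_point_inverse_general (d : ℕ)
    (φ : EuclideanSpace ℝ (Fin d) → ℝ)
    (hnonneg : ∀ x, 0 ≤ φ x)
    (hconv : ConvexOn ℝ Set.univ φ)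
    (hhom : ∀ c : ℝ, 0 < c → ∀ x, φ (c • x) = c * φ x)
    (ζ : ℝ) (hζ : 0 < ζ)
    (qb : EuclideanSpace ℝ (Fin d)) (hqb : φ qb = 1) :
    {q | q ∈ frontier ({x | φ x ≤ 1} + Metric.closedBall (0 : EuclideanSpace ℝ (Fin d)) ζ) ∧
        ‖q - qb‖ = Metric.infDist q {x | φ x ≤ 1}}
      = {q | ∃ p : EuclideanSpace ℝ (Fin d),
          (∀ y, φ qb + ⟪p, y - qb⟫_ℝ ≤ φ y) ∧ q = qb + (ζ / ‖p‖) • p} := by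
  have hcont : Continuous φ := continuousOn_univ.1 (hconv.continuousOn isOpen_univ)
  have hK : Convex ℝ {x | φ x ≤ 1} := by simpa using hconv.convex_le 1
  have hK0 : {x | φ x ≤ 1} ∈ 𝓝 0 := by
    refine mem_of_superset ((isOpen_lt hcont continuous_const).mem_nhds ?_)
      fun x (hx : φ x < 1) => hx.le
    simp [map_zero_of_pos_homogeneous hhom]
  have hqbK : qb ∈ {x | φ x ≤ 1} := hqb.le
  rw [(isClosed_le hcont continuous_const).add_closedBall_zero hζ.le]
  ext q
  simp only [Set.mem_ofPred_eq, hasSubgradient_iff_mem_normalCone hnonneg hhom hqb]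
  constructor
  · rintro ⟨hfr, hnear⟩
    have hv := (norm_sub_eq_infDist_iff_mem_normalCone hK hqbK).1 hnear
    have hnorm : ‖q - qb‖ = ζ := hnear.trans (infDist_eq_of_mem_frontier_cthickening hζ.le hfr)
    have hv0 : q - qb ≠ 0 := fun h => by simp [h] at hnorm; linarith
    have hc := inner_pos_of_mem_normalCone hK0 hv hv0
    refine ⟨(⟪q - qb, qb⟫_ℝ)⁻¹ • (q - qb), ⟨?_, smul_mem_normalCone hv (inv_nonneg.2 hc.le)⟩, ?_⟩
    · rw [real_inner_smul_left, inv_mul_cancel₀ hc.ne']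
    · rw [norm_smul, hnorm, Real.norm_of_nonneg (inv_nonneg.2 hc.le), smul_smul]
      rw [div_mul_cancel_right₀ hζ.ne', inv_inv, mul_inv_cancel₀ hc.ne', one_smul,
        add_sub_cancel]
  · rintro ⟨p, ⟨hpqb, hp⟩, rfl⟩
    have hp0 : p ≠ 0 := by rintro rfl; simp at hpqb
    have hnorm : ‖(ζ / ‖p‖) • p‖ = ζ := by
      rw [norm_smul, Real.norm_of_nonneg (by positivity), div_mul_cancel₀ _ (norm_ne_zero_iff.2 hp0)]
    have hv := smul_mem_normalCone hp (div_nonneg hζ.le (norm_nonneg p))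
    have hv0 : (ζ / ‖p‖) • p ≠ 0 := fun h => by
      rw [h, norm_zero] at hnorm
      exact hζ.ne hnorm
    refine ⟨?_, ?_⟩
    · simpa only [hnorm] using add_mem_frontier_cthickening hK hqbK hv hv0
    · rw [infDist_add_eq_norm_of_mem_normalCone hK hqbK hv, add_sub_cancel_left]

/-- The multivalued inverse of the nearest-point map 𝒬_ζ : ∂E_ζ → {φ = 1}:
    for q̄ with φ(q̄) = 1, the set of q ∈ ∂E_ζ whose closest point in {φ ≤ 1} is q̄
    equals q̄ + {ζ p / ‖p‖ : p ∈ ∂φ(q̄)}. -/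
theorem finsler_nearest_point_inverse (d : ℕ)
    (φ : EuclideanSpace ℝ (Fin d) → ℝ)
    (hnonneg : ∀ x, 0 ≤ φ x)
    (hconv : ConvexOn ℝ Set.univ φ)
    (hhom : ∀ c : ℝ, 0 < c → ∀ x, φ (c • x) = c * φ x)
    (hpos : ∀ x, x ≠ 0 → 0 < φ x)
    (ζ : ℝ) (hζ : 0 < ζ)
    (qb : EuclideanSpace ℝ (Fin d)) (hqb : φ qb = 1) :
    {q | q ∈ frontier ({x | φ x ≤ 1} + Metric.closedBall (0 : EuclideanSpace ℝ (Fin d)) ζ) ∧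
        ‖q - qb‖ = Metric.infDist q {x | φ x ≤ 1}}
      = {q | ∃ p : EuclideanSpace ℝ (Fin d),
          (∀ y, φ qb + ⟪p, y - qb⟫_ℝ ≤ φ y) ∧ q = qb + (ζ / ‖p‖) • p} :=
  finsler_nearest_point_inverse_general d φ hnonneg hconv hhom ζ hζ qb hqb
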